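/- arXiv:math/0702368 — 7 statements merged into one kernel-verified Lean document; each statement's English description precedes it below -/
import Mathlib

section
/- For every n ≥ 3, rank(B_n) ≥ rank(B_{n-1}) + 1, where the matrices are viewed over the rationals. -/
/-!
Viewing the rows of `B_n` as functions on `(ℤ/2)ⁿ`, row `(0, i)` is `1 - row (1, i)`, so the row
space is spanned by the constant `1`, the coordinate indicators `[σ_j = 1]` and the parity indicator
`[∑ σ = 1]`. For `n ≥ 2` these `n + 2` functions are linearly independent: evaluating a vanishing
combination at `0`, at the unit vectors and at `e₀ + e₁` (where the parity is even) forces every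
coefficient to vanish. Hence `rank B_n = n + 2` for all `n ≥ 2`.
-/

def clawMatrix (n : ℕ) : Matrix (ZMod 2 × Fin (n + 1)) (Fin n → ZMod 2) ℚ :=
  fun p σ =>
    if h : (p.2 : ℕ) < n then (if p.1 = σ ⟨p.2, h⟩ then 1 else 0)
    else (if p.1 = ∑ i, σ i then 1 else 0)

open Submodule Module

lemma zmod_two_eq_zero_or_one : ∀ g : ZMod 2, g = 0 ∨ g = 1 := by decide

namespace clawMatrix

variable {n : ℕ}

lemma apply_castSucc (g : ZMod 2) (j : Fin n) (σ : Fin n → ZMod 2) :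
    clawMatrix n (g, j.castSucc) σ = if g = σ j then 1 else 0 := by
  simp [clawMatrix]

lemma apply_last (g : ZMod 2) (σ : Fin n → ZMod 2) :
    clawMatrix n (g, Fin.last n) σ = if g = ∑ i, σ i then 1 else 0 := by
  simp [clawMatrix]

lemma row_zero (i : Fin (n + 1)) : clawMatrix n (0, i) = 1 - clawMatrix n (1, i) := by
  have h (x : ZMod 2) : (if (0 : ZMod 2) = x then (1 : ℚ) else 0) = 1 - if 1 = x then 1 else 0 := by
    obtain rfl | rfl := zmod_two_eq_zero_or_one x <;> simp
  funext σ
  simp only [clawMatrix, Pi.sub_apply, Pi.one_apply]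
  split <;> exact h _

def rowBasis (n : ℕ) : Option (Fin (n + 1)) → (Fin n → ZMod 2) → ℚ :=
  fun o => o.elim 1 fun i => clawMatrix n (1, i)

lemma span_range_rowBasis :
    span ℚ (Set.range (rowBasis n)) = span ℚ (Set.range (clawMatrix n).row) := by
  apply le_antisymm <;> rw [span_le]
  · rintro _ ⟨o | i, rfl⟩
    · have h : rowBasis n none = clawMatrix n (0, 0) + clawMatrix n (1, 0) := by
        simp [rowBasis, row_zero]
      rw [h]
      exact add_mem (subset_span ⟨(0, 0), rfl⟩) (subset_span ⟨(1, 0), rfl⟩)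
    · exact subset_span ⟨(1, i), rfl⟩
  · rintro _ ⟨⟨g, i⟩, rfl⟩
    have h1 : clawMatrix n (1, i) ∈ span ℚ (Set.range (rowBasis n)) := subset_span ⟨some i, rfl⟩
    obtain rfl | rfl := zmod_two_eq_zero_or_one g
    · rw [Matrix.row, row_zero]
      exact sub_mem (subset_span ⟨none, rfl⟩) h1
    · exact h1

lemma sum_smul_rowBasis_apply (c : Option (Fin (n + 1)) → ℚ) (σ : Fin n → ZMod 2) :
    (∑ o, c o • rowBasis n o) σ =
      c none + ∑ j : Fin n, c (some j.castSucc) * (if 1 = σ j then 1 else 0)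
        + c (some (Fin.last n)) * (if 1 = ∑ i, σ i then 1 else 0) := by
  simp [Fintype.sum_option, Fin.sum_univ_castSucc, rowBasis, apply_castSucc, apply_last, add_assoc]

lemma sum_smul_rowBasis_apply_indicator (c : Option (Fin (n + 1)) → ℚ) (s : Finset (Fin n)) :
    (∑ o, c o • rowBasis n o) (fun k => if k ∈ s then 1 else 0) =
      c none + ∑ j ∈ s, c (some j.castSucc) + if Odd s.card then c (some (Fin.last n)) else 0 := by
  have h (j : Fin n) : (1 : ZMod 2) = (if j ∈ s then 1 else 0) ↔ j ∈ s := by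
    split_ifs <;> simp_all
  rw [sum_smul_rowBasis_apply]
  simp [h, eq_comm (a := (1 : ZMod 2)), ZMod.natCast_eq_one_iff_odd]

lemma linearIndependent_rowBasis (hn : 2 ≤ n) : LinearIndependent ℚ (rowBasis n) := by
  rw [Fintype.linearIndependent_iff]
  intro c hc
  have eval s := (sum_smul_rowBasis_apply_indicator c s).symm.trans (congrFun hc _)
  have h0 : c none = 0 := by simpa using eval ∅
  have hs (j : Fin n) : c none + c (some j.castSucc) + c (some (Fin.last n)) = 0 := by
    simpa using eval {j}
  have hb : c (some (Fin.last n)) = 0 := by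
    have hp := eval {⟨0, by omega⟩, ⟨1, by omega⟩}
    have ha₀ := hs ⟨0, by omega⟩
    have ha₁ := hs ⟨1, by omega⟩
    simp [Nat.odd_iff] at hp ha₀ ha₁
    linarith
  rintro (_ | i)
  · exact h0
  · induction i using Fin.lastCases with
    | last => exact hb
    | cast j => linarith [hs j]

lemma rank_eq (hn : 2 ≤ n) : (clawMatrix n).rank = n + 2 := by
  rw [Matrix.rank_eq_finrank_span_row, ← span_range_rowBasis,
    finrank_span_eq_card (linearIndependent_rowBasis hn)]
  simp

end clawMatrix

/-- For every `n ≥ 3`, `rank(B_n) ≥ rank(B_{n-1}) + 1` over the rationals. -/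
theorem stmt_2 (n : ℕ) (hn : 3 ≤ n) :
    (clawMatrix (n - 1)).rank + 1 ≤ (clawMatrix n).rank := by
  rw [clawMatrix.rank_eq (by omega), clawMatrix.rank_eq (by omega)]
  omega
end

section
/- The kernel of B_3 over Q is 3-dimensional and is spanned by the three vectors (indexing columns by binary counting q_{000},q_{001},…,q_{111}): (0,0,1,−1,−1,1,0,0), (0,1,0,−1,−1,0,1,0), (1,0,0,−1,−1,0,0,1). -/
/-- Interpret a tuple of `8` rational numbers as a vector indexed by the columns of `B₃`,
ordered by binary counting `q₀₀₀, q₀₀₁, …, q₁₁₁`. -/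
def vec (a : Fin 8 → ℚ) : (Fin 3 → ZMod 2) → ℚ := fun σ =>
  a ⟨4 * (σ 0).val + 2 * (σ 1).val + (σ 2).val, by
    have h0 := ZMod.val_lt (σ 0)
    have h1 := ZMod.val_lt (σ 1)
    have h2 := ZMod.val_lt (σ 2)
    omega⟩


/-!
A vector in the kernel of `B₃` is determined by its values at the columns `q₀₁₀`, `q₀₀₁`, `q₀₀₀`:
five of the row equations force the other five coordinates to vanish once these three do.
The three given vectors `wᵢ` lie in the kernel and restrict to the standard basis of `ℚ³` on these
columns, hence they are independent and every kernel vector `v` equals `∑ v(qᵢ) wᵢ`.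
-/

open Finset

section PivotColumns

variable {K X ι : Type*} [Ring K] [Fintype ι] [DecidableEq ι] {w : ι → X → K} {p : ι → X}

theorem linearIndependent_of_apply_eq_single (hw : ∀ i j, w i (p j) = if i = j then 1 else 0) :
    LinearIndependent K w :=
  Fintype.linearIndependent_iff.2 fun c hc j => by
    simpa [Finset.sum_apply, hw] using congrFun hc (p j)

theorem Submodule.eq_span_range_of_apply_eq_single {W : Submodule K (X → K)} (hwW : ∀ i, w i ∈ W)
    (hw : ∀ i j, w i (p j) = if i = j then 1 else 0) (hW : ∀ v ∈ W, v ∘ p = 0 → v = 0) :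
    W = span K (Set.range w) := by
  refine le_antisymm (fun v hv => ?_) (span_le.2 (Set.range_subset_iff.2 hwW))
  have hrep : v - ∑ i, v (p i) • w i = 0 :=
    hW _ (W.sub_mem hv (W.sum_mem fun i _ => W.smul_mem _ (hwW i))) <| funext fun j => by
      simp [Finset.sum_apply, hw]
  exact (mem_span_range_iff_exists_fun K).2 ⟨_, (sub_eq_zero.1 hrep).symm⟩

end PivotColumns

theorem univ_fin_three_zmod_two : (univ : Finset (Fin 3 → ZMod 2)) =
    {![0,0,0], ![0,0,1], ![0,1,0], ![0,1,1], ![1,0,0], ![1,0,1], ![1,1,0], ![1,1,1]} := by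
  decide

theorem sum_fin_three_zmod_two {M : Type*} [AddCommMonoid M] (f : (Fin 3 → ZMod 2) → M) :
    ∑ σ, f σ = f ![0,0,0] + f ![0,0,1] + f ![0,1,0] + f ![0,1,1]
      + f ![1,0,0] + f ![1,0,1] + f ![1,1,0] + f ![1,1,1] := by
  rw [univ_fin_three_zmod_two]
  simp +decide only [sum_insert, mem_insert, mem_singleton, sum_singleton, add_assoc]

def clawPivots : Fin 3 → Fin 3 → ZMod 2 := ![![0,1,0], ![0,0,1], ![0,0,0]]

def clawKernelBasis : Fin 3 → (Fin 3 → ZMod 2) → ℚ :=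
  ![vec ![0, 0, 1, -1, -1, 1, 0, 0], vec ![0, 1, 0, -1, -1, 0, 1, 0], vec ![1, 0, 0, -1, -1, 0, 0, 1]]

theorem clawMatrix_three_mulVec_clawKernelBasis (i : Fin 3) :
    (clawMatrix 3).mulVec (clawKernelBasis i) = 0 := by
  revert i
  decide +kernel

theorem clawKernelBasis_apply_clawPivots (i j : Fin 3) :
    clawKernelBasis i (clawPivots j) = if i = j then 1 else 0 := by
  revert i j
  decide +kernel

theorem eq_zero_of_clawMatrix_three_mulVec_eq_zero {v : (Fin 3 → ZMod 2) → ℚ}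
    (hv : (clawMatrix 3).mulVec v = 0) (hp : v ∘ clawPivots = 0) : v = 0 := by
  have hrow : ∀ r, ∑ σ, clawMatrix 3 r σ * v σ = 0 := congrFun hv
  have h00 : v ![0,0,0] + v ![0,0,1] + v ![0,1,0] + v ![0,1,1] = 0 := by
    simpa +decide [sum_fin_three_zmod_two, clawMatrix] using hrow (0, 0)
  have h01 : v ![0,0,0] + v ![0,0,1] + v ![1,0,0] + v ![1,0,1] = 0 := by
    simpa +decide [sum_fin_three_zmod_two, clawMatrix] using hrow (0, 1)
  have h02 : v ![0,0,0] + v ![0,1,0] + v ![1,0,0] + v ![1,1,0] = 0 := by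
    simpa +decide [sum_fin_three_zmod_two, clawMatrix] using hrow (0, 2)
  have h03 : v ![0,0,0] + v ![0,1,1] + v ![1,0,1] + v ![1,1,0] = 0 := by
    simpa +decide [sum_fin_three_zmod_two, clawMatrix, Fin.sum_univ_three] using hrow (0, 3)
  have h10 : v ![1,0,0] + v ![1,0,1] + v ![1,1,0] + v ![1,1,1] = 0 := by
    simpa +decide [sum_fin_three_zmod_two, clawMatrix] using hrow (1, 0)
  have hp0 : v ![0,1,0] = 0 := congrFun hp 0
  have hp1 : v ![0,0,1] = 0 := congrFun hp 1
  have hp2 : v ![0,0,0] = 0 := congrFun hp 2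
  funext σ
  have hσ := mem_univ σ
  simp only [univ_fin_three_zmod_two, mem_insert, mem_singleton] at hσ
  rcases hσ with rfl | rfl | rfl | rfl | rfl | rfl | rfl | rfl <;> simp only [Pi.zero_apply] <;> linarith

/-- The kernel of `B₃` over `ℚ` is 3-dimensional, spanned by the vectors
`(0,0,1,−1,−1,1,0,0)`, `(0,1,0,−1,−1,0,1,0)`, `(1,0,0,−1,−1,0,0,1)`
(columns ordered by binary counting). -/
theorem stmt_5 :
    Module.finrank ℚ (LinearMap.ker (clawMatrix 3).mulVecLin) = 3 ∧
      LinearMap.ker (clawMatrix 3).mulVecLin =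
        Submodule.span ℚ
          {vec ![0, 0, 1, -1, -1, 1, 0, 0],
           vec ![0, 1, 0, -1, -1, 0, 1, 0],
           vec ![1, 0, 0, -1, -1, 0, 0, 1]} := by
  have hker : LinearMap.ker (clawMatrix 3).mulVecLin = Submodule.span ℚ (Set.range clawKernelBasis) :=
    Submodule.eq_span_range_of_apply_eq_single clawMatrix_three_mulVec_clawKernelBasis
      clawKernelBasis_apply_clawPivots fun _ hv => eq_zero_of_clawMatrix_three_mulVec_eq_zero hv
  have hrange : Set.range clawKernelBasis = {vec ![0, 0, 1, -1, -1, 1, 0, 0],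
      vec ![0, 1, 0, -1, -1, 0, 1, 0], vec ![1, 0, 0, -1, -1, 0, 0, 1]} := by
    rw [clawKernelBasis, Matrix.range_cons, Matrix.range_cons_cons_empty, Set.singleton_union]
  refine ⟨?_, hrange ▸ hker⟩
  rw [hker, finrank_span_eq_card (linearIndependent_of_apply_eq_single clawKernelBasis_apply_clawPivots),
    Fintype.card_fin]
end

section
/- The vector v = (0,…,0,1,0,0,−1,−1,0,0,1) ∈ Z^{2^n} (supported on the last 8 columns, under the binary-counting column order) lies in the kernel of B_n for every n ≥ 3. -/
/-- The vector `(0,…,0,1,0,0,−1,−1,0,0,1) ∈ ℤ^(2^n)`, supported on the last `8` columns in the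
binary-counting column order: its value at a column `σ` is `0` unless `σ_k = 1` for all
`k < n - 3`, in which case it is given by the pattern `(1,0,0,−1,−1,0,0,1)` on the last three
coordinates of `σ`. -/
def lastVec (n : ℕ) (hn : 3 ≤ n) : (Fin n → ZMod 2) → ℚ := fun σ =>
  if ∀ k : Fin n, (k : ℕ) < n - 3 → σ k = 1 then
    (![1, 0, 0, -1, -1, 0, 0, 1] : Fin 8 → ℚ)
      ⟨4 * (σ ⟨n - 3, by omega⟩).val + 2 * (σ ⟨n - 2, by omega⟩).val + (σ ⟨n - 1, by omega⟩).val,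
        by
          have h0 := ZMod.val_lt (σ ⟨n - 3, by omega⟩)
          have h1 := ZMod.val_lt (σ ⟨n - 2, by omega⟩)
          have h2 := ZMod.val_lt (σ ⟨n - 1, by omega⟩)
          omega⟩
  else 0

def ext8 (n : ℕ) (t : Fin 8) : Fin n → ZMod 2 := fun k =>
  if (k : ℕ) = n - 3 then ((t.val / 4 : ℕ) : ZMod 2)
  else if (k : ℕ) = n - 2 then ((t.val / 2 % 2 : ℕ) : ZMod 2)
  else if (k : ℕ) = n - 1 then ((t.val % 2 : ℕ) : ZMod 2)
  else 1

def idx3 (n : ℕ) (hn : 3 ≤ n) (σ : Fin n → ZMod 2) : Fin 8 :=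
  ⟨4 * (σ ⟨n - 3, by omega⟩).val + 2 * (σ ⟨n - 2, by omega⟩).val + (σ ⟨n - 1, by omega⟩).val,
    by
      have h0 := ZMod.val_lt (σ ⟨n - 3, by omega⟩)
      have h1 := ZMod.val_lt (σ ⟨n - 2, by omega⟩)
      have h2 := ZMod.val_lt (σ ⟨n - 1, by omega⟩)
      omega⟩

lemma ext8_apply (n : ℕ) (hn : 3 ≤ n) (t : Fin 8) (k : Fin n) :
    ext8 n t k = if (k : ℕ) = n - 3 then ((t.val / 4 : ℕ) : ZMod 2)
      else if (k : ℕ) = n - 2 then ((t.val / 2 % 2 : ℕ) : ZMod 2)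
      else if (k : ℕ) = n - 1 then ((t.val % 2 : ℕ) : ZMod 2)
      else 1 := rfl

lemma ext8_low (n : ℕ) (hn : 3 ≤ n) (t : Fin 8) (k : Fin n) (hk : (k : ℕ) < n - 3) :
    ext8 n t k = 1 := by
  rw [ext8_apply n hn, if_neg (by omega), if_neg (by omega), if_neg (by omega)]

lemma ext8_3 (n : ℕ) (hn : 3 ≤ n) (t : Fin 8) (k : Fin n) (hk : (k : ℕ) = n - 3) :
    ext8 n t k = ((t.val / 4 : ℕ) : ZMod 2) := by
  rw [ext8_apply n hn, if_pos hk]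

lemma ext8_2 (n : ℕ) (hn : 3 ≤ n) (t : Fin 8) (k : Fin n) (hk : (k : ℕ) = n - 2) :
    ext8 n t k = ((t.val / 2 % 2 : ℕ) : ZMod 2) := by
  rw [ext8_apply n hn, if_neg (by omega), if_pos hk]

lemma ext8_1 (n : ℕ) (hn : 3 ≤ n) (t : Fin 8) (k : Fin n) (hk : (k : ℕ) = n - 1) :
    ext8 n t k = ((t.val % 2 : ℕ) : ZMod 2) := by
  rw [ext8_apply n hn, if_neg (by omega), if_neg (by omega), if_pos hk]

lemma idx3_ext8 (n : ℕ) (hn : 3 ≤ n) (t : Fin 8) : idx3 n hn (ext8 n t) = t := by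
  have ht := t.isLt
  apply Fin.ext
  show 4 * (ext8 n t ⟨n - 3, by omega⟩).val + 2 * (ext8 n t ⟨n - 2, by omega⟩).val
      + (ext8 n t ⟨n - 1, by omega⟩).val = t.val
  rw [ext8_3 n hn t _ rfl, ext8_2 n hn t _ rfl, ext8_1 n hn t _ rfl]
  simp only [ZMod.val_natCast]
  omega

lemma idx3_div4 (n : ℕ) (hn : 3 ≤ n) (σ : Fin n → ZMod 2) :
    ((idx3 n hn σ : Fin 8) : ℕ) / 4 = (σ ⟨n - 3, by omega⟩).val := by
  show (4 * (σ ⟨n - 3, by omega⟩).val + 2 * (σ ⟨n - 2, by omega⟩).val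
      + (σ ⟨n - 1, by omega⟩).val) / 4 = _
  have h1 := ZMod.val_lt (σ ⟨n - 2, by omega⟩)
  have h2 := ZMod.val_lt (σ ⟨n - 1, by omega⟩)
  omega

lemma idx3_div2 (n : ℕ) (hn : 3 ≤ n) (σ : Fin n → ZMod 2) :
    ((idx3 n hn σ : Fin 8) : ℕ) / 2 % 2 = (σ ⟨n - 2, by omega⟩).val := by
  show (4 * (σ ⟨n - 3, by omega⟩).val + 2 * (σ ⟨n - 2, by omega⟩).val
      + (σ ⟨n - 1, by omega⟩).val) / 2 % 2 = _
  have h1 := ZMod.val_lt (σ ⟨n - 2, by omega⟩)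
  have h2 := ZMod.val_lt (σ ⟨n - 1, by omega⟩)
  omega

lemma idx3_mod2 (n : ℕ) (hn : 3 ≤ n) (σ : Fin n → ZMod 2) :
    ((idx3 n hn σ : Fin 8) : ℕ) % 2 = (σ ⟨n - 1, by omega⟩).val := by
  show (4 * (σ ⟨n - 3, by omega⟩).val + 2 * (σ ⟨n - 2, by omega⟩).val
      + (σ ⟨n - 1, by omega⟩).val) % 2 = _
  have h2 := ZMod.val_lt (σ ⟨n - 1, by omega⟩)
  omega

lemma ext8_idx3 (n : ℕ) (hn : 3 ≤ n) (σ : Fin n → ZMod 2)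
    (hσ : ∀ k : Fin n, (k : ℕ) < n - 3 → σ k = 1) : ext8 n (idx3 n hn σ) = σ := by
  funext k
  by_cases hk3 : (k : ℕ) = n - 3
  · rw [ext8_3 n hn _ k hk3, show k = ⟨n - 3, by omega⟩ from Fin.ext hk3, idx3_div4 n hn σ]
    simp
  · by_cases hk2 : (k : ℕ) = n - 2
    · rw [ext8_2 n hn _ k hk2, show k = ⟨n - 2, by omega⟩ from Fin.ext hk2, idx3_div2 n hn σ]
      simp
    · by_cases hk1 : (k : ℕ) = n - 1
      · rw [ext8_1 n hn _ k hk1, show k = ⟨n - 1, by omega⟩ from Fin.ext hk1, idx3_mod2 n hn σ]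
        simp
      · rw [ext8_low n hn _ k (by omega), hσ k (by omega)]

lemma lastVec_eq (n : ℕ) (hn : 3 ≤ n) (σ : Fin n → ZMod 2)
    (hσ : ∀ k : Fin n, (k : ℕ) < n - 3 → σ k = 1) :
    lastVec n hn σ = (![1, 0, 0, -1, -1, 0, 0, 1] : Fin 8 → ℚ) (idx3 n hn σ) := by
  rw [lastVec, if_pos hσ]; rfl
lemma key (n : ℕ) (hn : 3 ≤ n) (A : (Fin n → ZMod 2) → ℚ) :
    ∑ σ : Fin n → ZMod 2, A σ * lastVec n hn σ
      = ∑ t : Fin 8, A (ext8 n t) * (![1, 0, 0, -1, -1, 0, 0, 1] : Fin 8 → ℚ) t := by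
  classical
  rw [← Finset.sum_filter_of_ne
    (p := fun σ : Fin n → ZMod 2 => ∀ k : Fin n, (k : ℕ) < n - 3 → σ k = 1)
    (by
      intro σ _ hne
      by_contra hP
      exact hne (by simp [lastVec, hP]))]
  refine Finset.sum_nbij' (i := fun σ => idx3 n hn σ) (j := fun t => ext8 n t) ?_ ?_ ?_ ?_ ?_
  · intro a _; exact Finset.mem_univ _
  · intro t _
    simp only [Finset.mem_filter, Finset.mem_univ, true_and]
    intro k hk
    exact ext8_low n hn t k hk
  · intro σ hσ
    simp only [Finset.mem_filter, Finset.mem_univ, true_and] at hσ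
    exact ext8_idx3 n hn σ hσ
  · intro t _
    exact idx3_ext8 n hn t
  · intro σ hσ
    simp only [Finset.mem_filter, Finset.mem_univ, true_and] at hσ
    rw [lastVec_eq n hn σ hσ]
    show _ = A (ext8 n (idx3 n hn σ)) * _
    rw [ext8_idx3 n hn σ hσ]
lemma ext8_sum (n : ℕ) (hn : 3 ≤ n) (t : Fin 8) :
    ∑ j : Fin n, ext8 n t j
      = ((n - 3 : ℕ) : ZMod 2) + ((t.val / 4 : ℕ) : ZMod 2) + ((t.val / 2 % 2 : ℕ) : ZMod 2)
        + ((t.val % 2 : ℕ) : ZMod 2) := by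
  classical
  set S : Finset (Fin n) := {⟨n - 3, by omega⟩, ⟨n - 2, by omega⟩, ⟨n - 1, by omega⟩} with hS
  have hcard : S.card = 3 := by
    rw [hS, Finset.card_insert_of_notMem, Finset.card_insert_of_notMem, Finset.card_singleton]
    · simp only [Finset.mem_singleton]
      intro h; have := congrArg Fin.val h; simp at this; omega
    · simp only [Finset.mem_insert, Finset.mem_singleton]
      rintro (h | h) <;> · have := congrArg Fin.val h; simp at this; omega
  rw [← Finset.sum_add_sum_compl S (ext8 n t)]
  have h1 : ∑ j ∈ S, ext8 n t j = ((t.val / 4 : ℕ) : ZMod 2) + ((t.val / 2 % 2 : ℕ) : ZMod 2)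
      + ((t.val % 2 : ℕ) : ZMod 2) := by
    rw [hS, Finset.sum_insert, Finset.sum_insert, Finset.sum_singleton]
    · rw [ext8_3 n hn t _ rfl, ext8_2 n hn t _ rfl, ext8_1 n hn t _ rfl, add_assoc]
    · simp only [Finset.mem_singleton]
      intro h; have := congrArg Fin.val h; simp at this; omega
    · simp only [Finset.mem_insert, Finset.mem_singleton]
      rintro (h | h) <;> · have := congrArg Fin.val h; simp at this; omega
  have h2 : ∑ j ∈ Sᶜ, ext8 n t j = ((n - 3 : ℕ) : ZMod 2) := by
    rw [Finset.sum_congr rfl (fun j hj => ?_), Finset.sum_const, Finset.card_compl, hcard,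
      Fintype.card_fin, nsmul_eq_mul, mul_one]
    · rw [Finset.mem_compl, hS] at hj
      simp only [Finset.mem_insert, Finset.mem_singleton] at hj
      push_neg at hj
      obtain ⟨ha, hb, hc⟩ := hj
      refine ext8_low n hn t j ?_
      have ha' : (j : ℕ) ≠ n - 3 := fun h => ha (Fin.ext h)
      have hb' : (j : ℕ) ≠ n - 2 := fun h => hb (Fin.ext h)
      have hc' : (j : ℕ) ≠ n - 1 := fun h => hc (Fin.ext h)
      have := j.isLt
      omega
  rw [h1, h2]
  ring

lemma zmod2_cases (x : ZMod 2) : x = 0 ∨ x = 1 := by revert x; decide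

lemma fv0 : ((0:Fin 8):ℕ) = 0 := rfl
lemma fv1 : ((1:Fin 8):ℕ) = 1 := rfl
lemma fv2 : ((2:Fin 8):ℕ) = 2 := rfl
lemma fv3 : ((3:Fin 8):ℕ) = 3 := rfl
lemma fv4 : ((4:Fin 8):ℕ) = 4 := rfl
lemma fv5 : ((5:Fin 8):ℕ) = 5 := rfl
lemma fv6 : ((6:Fin 8):ℕ) = 6 := rfl
lemma fv7 : ((7:Fin 8):ℕ) = 7 := rfl
lemma wv5 : (![1, 0, 0, -1, -1, 0, 0, 1] : Fin 8 → ℚ) 5 = 0 := rfl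
lemma wv6 : (![1, 0, 0, -1, -1, 0, 0, 1] : Fin 8 → ℚ) 6 = 0 := rfl
lemma wv7 : (![1, 0, 0, -1, -1, 0, 0, 1] : Fin 8 → ℚ) 7 = 1 := rfl

lemma sum_w : ∑ t : Fin 8, (![1, 0, 0, -1, -1, 0, 0, 1] : Fin 8 → ℚ) t = 0 := by
  simp [Fin.sum_univ_eight, wv5, wv6, wv7]

lemma case3 (g : ZMod 2) :
    ∑ t : Fin 8, (if g = ((t.val / 4 : ℕ) : ZMod 2) then (1:ℚ) else 0)
      * (![1, 0, 0, -1, -1, 0, 0, 1] : Fin 8 → ℚ) t = 0 := by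
  rcases zmod2_cases g with h | h <;> subst h <;>
    simp (config := { decide := true }) [Fin.sum_univ_eight,
      fv0, fv1, fv2, fv3, fv4, fv5, fv6, fv7, wv5, wv6, wv7]

lemma case2 (g : ZMod 2) :
    ∑ t : Fin 8, (if g = ((t.val / 2 % 2 : ℕ) : ZMod 2) then (1:ℚ) else 0)
      * (![1, 0, 0, -1, -1, 0, 0, 1] : Fin 8 → ℚ) t = 0 := by
  rcases zmod2_cases g with h | h <;> subst h <;>
    simp (config := { decide := true }) [Fin.sum_univ_eight,
      fv0, fv1, fv2, fv3, fv4, fv5, fv6, fv7, wv5, wv6, wv7]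

lemma case1 (g : ZMod 2) :
    ∑ t : Fin 8, (if g = ((t.val % 2 : ℕ) : ZMod 2) then (1:ℚ) else 0)
      * (![1, 0, 0, -1, -1, 0, 0, 1] : Fin 8 → ℚ) t = 0 := by
  rcases zmod2_cases g with h | h <;> subst h <;>
    simp (config := { decide := true }) [Fin.sum_univ_eight,
      fv0, fv1, fv2, fv3, fv4, fv5, fv6, fv7, wv5, wv6, wv7]

lemma caseP (g c0 : ZMod 2) :
    ∑ t : Fin 8, (if g = c0 + ((t.val / 4 : ℕ) : ZMod 2) + ((t.val / 2 % 2 : ℕ) : ZMod 2)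
        + ((t.val % 2 : ℕ) : ZMod 2) then (1:ℚ) else 0)
      * (![1, 0, 0, -1, -1, 0, 0, 1] : Fin 8 → ℚ) t = 0 := by
  rcases zmod2_cases g with h | h <;> subst h <;> rcases zmod2_cases c0 with h | h <;> subst h <;>
    simp (config := { decide := true }) [Fin.sum_univ_eight,
      fv0, fv1, fv2, fv3, fv4, fv5, fv6, fv7, wv5, wv6, wv7]
lemma caseLow (g : ZMod 2) :
    ∑ t : Fin 8, (if g = 1 then (1:ℚ) else 0)
      * (![1, 0, 0, -1, -1, 0, 0, 1] : Fin 8 → ℚ) t = 0 := by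
  rw [← Finset.mul_sum, sum_w, mul_zero]

/-- The vector `v = (0,…,0,1,0,0,−1,−1,0,0,1)` lies in the kernel of `B_n` for every `n ≥ 3`. -/
theorem stmt_6 (n : ℕ) (hn : 3 ≤ n) :
    (clawMatrix n).mulVec (lastVec n hn) = 0 := by
  funext p
  obtain ⟨g, i⟩ := p
  simp only [Matrix.mulVec, dotProduct, Pi.zero_apply]
  rw [key n hn (clawMatrix n (g, i))]
  by_cases h : (i : ℕ) < n
  · by_cases h3 : (i : ℕ) < n - 3
    · have he : ∀ t : Fin 8, clawMatrix n (g, i) (ext8 n t) = if g = 1 then (1:ℚ) else 0 := by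
        intro t
        show (if h : (i : ℕ) < n then _ else _) = _
        rw [dif_pos h, ext8_low n hn t ⟨i, h⟩ h3]
      simp only [he]
      exact caseLow g
    · by_cases hc3 : (i : ℕ) = n - 3
      · have he : ∀ t : Fin 8, clawMatrix n (g, i) (ext8 n t)
            = if g = ((t.val / 4 : ℕ) : ZMod 2) then (1:ℚ) else 0 := by
          intro t
          show (if h : (i : ℕ) < n then _ else _) = _
          rw [dif_pos h, ext8_3 n hn t ⟨i, h⟩ hc3]
        simp only [he]
        exact case3 g
      · by_cases hc2 : (i : ℕ) = n - 2
        · have he : ∀ t : Fin 8, clawMatrix n (g, i) (ext8 n t)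
              = if g = ((t.val / 2 % 2 : ℕ) : ZMod 2) then (1:ℚ) else 0 := by
            intro t
            show (if h : (i : ℕ) < n then _ else _) = _
            rw [dif_pos h, ext8_2 n hn t ⟨i, h⟩ hc2]
          simp only [he]
          exact case2 g
        · have hc1 : (i : ℕ) = n - 1 := by omega
          have he : ∀ t : Fin 8, clawMatrix n (g, i) (ext8 n t)
              = if g = ((t.val % 2 : ℕ) : ZMod 2) then (1:ℚ) else 0 := by
            intro t
            show (if h : (i : ℕ) < n then _ else _) = _
            rw [dif_pos h, ext8_1 n hn t ⟨i, h⟩ hc1]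
          simp only [he]
          exact case1 g
  · have he : ∀ t : Fin 8, clawMatrix n (g, i) (ext8 n t)
        = if g = ((n - 3 : ℕ) : ZMod 2) + ((t.val / 4 : ℕ) : ZMod 2)
            + ((t.val / 2 % 2 : ℕ) : ZMod 2) + ((t.val % 2 : ℕ) : ZMod 2) then (1:ℚ) else 0 := by
      intro t
      show (if h : (i : ℕ) < n then _ else _) = _
      rw [dif_neg h, ext8_sum n hn t]
    simp only [he]
    exact caseP g _
end

section
/- A quadratic squarefree binomial q = q_{g1^{(1)}g1^{(2)}g1^{(3)}} q_{g2^{(1)}g2^{(2)}g2^{(3)}} − q_{h1^{(1)}h1^{(2)}h1^{(3)}} q_{h2^{(1)}h2^{(2)}h2^{(3)}} with distinct variables lies in ker φ_3 if and only if (after possibly swapping h_1 and h_2): (1) g1^{(1)}+g1^{(2)}+g1^{(3)} = h1^{(1)}+h1^{(2)}+h1^{(3)} and g2^{(1)}+g2^{(2)}+g2^{(3)} = h2^{(1)}+h2^{(2)}+h2^{(3)} in Z2, and (2) g1^{(i)}+g2^{(i)} = 1 = h1^{(i)}+h2^{(i)} in Z2 for all 1 ≤ i ≤ 3, with the multiset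 {(g1^{(i)})_i,(g2^{(i)})_i} different from {(h1^{(i)})_i,(h2^{(i)})_i}. -/
open MvPolynomial

/-!
`φ₃` sends `q_σ` to the monomial whose exponent is the graph of `(σ, Σ σ)`, so the binomial lies in
the kernel iff `{g₁ i, g₂ i} = {h₁ i, h₂ i}` for every coordinate and `{Σ g₁, Σ g₂} = {Σ h₁, Σ h₂}`.
Over `ℤ/2` the coordinate condition says `h₁ = g₁ + d` and `h₂ = g₂ + d` with `d` supported on the
set `T` where `g₁` and `g₂` differ, and `{g₁, g₂} ≠ {h₁, h₂}` means `d ≠ 0, 1_T`. If `T` is not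
everything then, in dimension three, `T` has two elements and `d` one, so `Σ g₁ = Σ g₂` while both
sums of the `h`'s are flipped, contradicting the sum condition. Hence `g₁ + g₂ = 1 = h₁ + h₂`, and
the sum condition pairs the `h`'s with the `g`'s.
-/

noncomputable def phi (n : ℕ) :
    MvPolynomial (Fin n → ZMod 2) ℂ →ₐ[ℂ] MvPolynomial (ZMod 2 × Fin (n + 1)) ℂ :=
  aeval fun σ => (∏ i : Fin n, X (σ i, Fin.castSucc i)) * X (∑ i, σ i, Fin.last n)

theorem Multiset.pair_eq_pair_iff {α : Type*} {a b c d : α} :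
    ({a, b} : Multiset α) = {c, d} ↔ a = c ∧ b = d ∨ a = d ∧ b = c := by
  refine ⟨fun h => ?_, ?_⟩
  · rw [Multiset.insert_eq_cons, Multiset.insert_eq_cons, Multiset.cons_eq_cons] at h
    rcases h with ⟨rfl, h⟩ | ⟨_, s, hb, hd⟩
    · exact Or.inl ⟨rfl, Multiset.singleton_inj.1 h⟩
    · rw [Multiset.singleton_eq_cons_iff] at hb hd
      exact Or.inr ⟨hd.1.symm, hb.1⟩
  · rintro (⟨rfl, rfl⟩ | ⟨rfl, rfl⟩)
    · rfl
    · exact Multiset.pair_comm _ _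

noncomputable def graphFinsupp {ι α : Type*} [Fintype ι] (u : ι → α) : (α × ι) →₀ ℕ :=
  ∑ j, Finsupp.single (u j, j) 1

section graphFinsupp

variable {ι α : Type*} [Fintype ι]

theorem graphFinsupp_apply [DecidableEq α] (u : ι → α) (a : α) (j : ι) :
    graphFinsupp u (a, j) = if u j = a then 1 else 0 := by
  classical
  simp [graphFinsupp, Finsupp.finsetSum_apply, Finsupp.single_apply, Prod.ext_iff, and_comm,
    ite_and]

theorem graphFinsupp_add_apply [DecidableEq α] (u v : ι → α) (a : α) (j : ι) :
    (graphFinsupp u + graphFinsupp v) (a, j) = Multiset.count a {u j, v j} := by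
  simp [graphFinsupp_apply, Multiset.count_cons, Multiset.count_singleton, eq_comm, add_comm]

theorem graphFinsupp_add_inj {u v w z : ι → α} :
    graphFinsupp u + graphFinsupp v = graphFinsupp w + graphFinsupp z ↔
      ∀ j, ({u j, v j} : Multiset α) = {w j, z j} := by
  classical
  refine ⟨fun h j => Multiset.ext.2 fun a => ?_, fun h => Finsupp.ext fun ⟨a, j⟩ => ?_⟩
  · rw [← graphFinsupp_add_apply, h, graphFinsupp_add_apply]
  · rw [graphFinsupp_add_apply, h, graphFinsupp_add_apply]

end graphFinsupp

theorem phi_X {n : ℕ} (σ : Fin n → ZMod 2) :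
    phi n (X σ) = monomial (graphFinsupp (Fin.snoc σ (∑ i, σ i) : Fin (n + 1) → ZMod 2)) 1 := by
  rw [graphFinsupp, monomial_sum_one, Fin.prod_univ_castSucc, phi, aeval_X]
  simp only [Fin.snoc_castSucc, Fin.snoc_last]
  rfl

theorem X_mul_X_sub_X_mul_X_mem_ker_phi_iff {n : ℕ} (g₁ g₂ h₁ h₂ : Fin n → ZMod 2) :
    X g₁ * X g₂ - X h₁ * X h₂ ∈ RingHom.ker (phi n).toRingHom ↔
      (∀ i, ({g₁ i, g₂ i} : Multiset (ZMod 2)) = {h₁ i, h₂ i}) ∧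
        ({∑ i, g₁ i, ∑ i, g₂ i} : Multiset (ZMod 2)) = {∑ i, h₁ i, ∑ i, h₂ i} := by
  rw [RingHom.sub_mem_ker_iff]
  simp only [AlgHom.toRingHom_eq_coe, RingHom.coe_coe, map_mul, phi_X, monomial_mul, mul_one]
  rw [monomial_left_inj one_ne_zero, graphFinsupp_add_inj, Fin.forall_fin_succ']
  simp only [Fin.snoc_castSucc, Fin.snoc_last]

namespace ZMod

theorem sub_eq_sub_of_pair_eq_pair {a b c d : ZMod 2}
    (h : ({a, b} : Multiset (ZMod 2)) = {c, d}) : d - b = c - a ∧ (a = b → c = a) := by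
  revert a b c d; decide

theorem pair_eq_pair_of_add_eq_one {a b c d : ZMod 2} (hab : a + b = 1) (hcd : c + d = 1) :
    ({a, b} : Multiset (ZMod 2)) = {c, d} := by
  revert a b c d; decide

theorem pair_self_ne_pair_add_one (x : ZMod 2) :
    ({x, x} : Multiset (ZMod 2)) ≠ {x + 1, x + 1} := by
  revert x; decide

end ZMod

/-- In `Fin 3`, a nonempty proper subset of a proper subset has one element and the subset two. -/
theorem sum_eq_one_and_sum_eq_zero_of_support_ssubset (d t : Fin 3 → ZMod 2)
    (hdt : ∀ i, t i = 0 → d i = 0) (hd : d ≠ 0) (hd' : d ≠ t) (ht : ∃ i, t i = 0) :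
    ∑ i, d i = 1 ∧ ∑ i, t i = 0 := by
  revert d t; decide

theorem add_eq_one_of_pair_eq_pair {g₁ g₂ h₁ h₂ : Fin 3 → ZMod 2}
    (hne : ({g₁, g₂} : Multiset (Fin 3 → ZMod 2)) ≠ {h₁, h₂})
    (hcoord : ∀ i, ({g₁ i, g₂ i} : Multiset (ZMod 2)) = {h₁ i, h₂ i})
    (hsum : ({∑ i, g₁ i, ∑ i, g₂ i} : Multiset (ZMod 2)) = {∑ i, h₁ i, ∑ i, h₂ i}) (i : Fin 3) :
    g₁ i + g₂ i = 1 := by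
  by_contra hi
  set d := h₁ - g₁
  set t := g₂ - g₁
  have hh₁ : h₁ = g₁ + d := (add_sub_cancel g₁ h₁).symm
  have hg₂ : g₂ = g₁ + t := (add_sub_cancel g₁ g₂).symm
  have hh₂ : h₂ = g₂ + d := funext fun j => by
    simp [d, ← (ZMod.sub_eq_sub_of_pair_eq_pair (hcoord j)).1]
  have hdt : ∀ j, t j = 0 → d j = 0 := fun j htj => by
    have := (ZMod.sub_eq_sub_of_pair_eq_pair (hcoord j)).2 (sub_eq_zero.1 htj).symm
    simp [d, this]
  have hd : d ≠ 0 := fun h => hne <| by rw [hh₁, hh₂, h, add_zero, add_zero]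
  have hd' : d ≠ t := fun h => hne <| by
    rw [hh₁, hh₂, h, ← hg₂, Multiset.pair_comm g₁]
    congr 2
    funext j
    have : ∀ a b : ZMod 2, b + (b - a) = a := by decide
    exact (this (g₁ j) (g₂ j)).symm
  have ht : ∃ j, t j = 0 := ⟨i, by
    have : ∀ a b : ZMod 2, a + b ≠ 1 → b - a = 0 := by decide
    exact this _ _ hi⟩
  obtain ⟨hd1, ht0⟩ := sum_eq_one_and_sum_eq_zero_of_support_ssubset d t hdt hd hd' ht
  rw [hh₂, hh₁, hg₂] at hsum
  simp only [Pi.add_apply, Finset.sum_add_distrib, hd1, ht0, add_zero] at hsum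
  exact ZMod.pair_self_ne_pair_add_one _ hsum

theorem stmt_10_general (g₁ g₂ h₁ h₂ : Fin 3 → ZMod 2)
    (hne : ({g₁, g₂} : Multiset (Fin 3 → ZMod 2)) ≠ {h₁, h₂}) :
    X g₁ * X g₂ - X h₁ * X h₂ ∈ RingHom.ker (phi 3).toRingHom ↔
      ∃ h₁' h₂' : Fin 3 → ZMod 2,
        ({h₁', h₂'} : Multiset (Fin 3 → ZMod 2)) = {h₁, h₂} ∧
        (∑ i, g₁ i) = (∑ i, h₁' i) ∧ (∑ i, g₂ i) = (∑ i, h₂' i) ∧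
        ∀ i : Fin 3, g₁ i + g₂ i = 1 ∧ h₁' i + h₂' i = 1 := by
  rw [X_mul_X_sub_X_mul_X_mem_ker_phi_iff]
  constructor
  · rintro ⟨hcoord, hsum⟩
    have hg := add_eq_one_of_pair_eq_pair hne hcoord hsum
    have hh : ∀ i, h₁ i + h₂ i = 1 := fun i => by
      rw [← hg i, ← Multiset.sum_pair, ← Multiset.sum_pair, hcoord i]
    rcases Multiset.pair_eq_pair_iff.1 hsum with ⟨e₁, e₂⟩ | ⟨e₁, e₂⟩
    · exact ⟨h₁, h₂, rfl, e₁, e₂, fun i => ⟨hg i, hh i⟩⟩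
    · exact ⟨h₂, h₁, Multiset.pair_comm _ _, e₁, e₂, fun i => ⟨hg i, add_comm (h₁ i) _ ▸ hh i⟩⟩
  · rintro ⟨h₁', h₂', hpair, e₁, e₂, hone⟩
    have hcoord i : ({g₁ i, g₂ i} : Multiset (ZMod 2)) = {h₁' i, h₂' i} :=
      ZMod.pair_eq_pair_of_add_eq_one (hone i).1 (hone i).2
    rcases Multiset.pair_eq_pair_iff.1 hpair with ⟨rfl, rfl⟩ | ⟨rfl, rfl⟩
    · exact ⟨hcoord, by rw [e₁, e₂]⟩
    · exact ⟨fun i => (hcoord i).trans (Multiset.pair_comm _ _), by rw [e₁, e₂, Multiset.pair_comm]⟩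

/-- A nonzero squarefree quadratic binomial `q_{g₁}q_{g₂} − q_{h₁}q_{h₂}` lies in `ker φ₃`
iff, after possibly swapping `h₁` and `h₂`, the coordinate sums match
(`Σ g₁ = Σ h₁`, `Σ g₂ = Σ h₂`) and `g₁⁽ⁱ⁾ + g₂⁽ⁱ⁾ = 1 = h₁⁽ⁱ⁾ + h₂⁽ⁱ⁾` for all `1 ≤ i ≤ 3`. -/
theorem stmt_10 (g₁ g₂ h₁ h₂ : Fin 3 → ZMod 2)
    (hg : g₁ ≠ g₂) (hh : h₁ ≠ h₂)
    (hne : ({g₁, g₂} : Multiset (Fin 3 → ZMod 2)) ≠ {h₁, h₂}) :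
    X g₁ * X g₂ - X h₁ * X h₂ ∈ RingHom.ker (phi 3).toRingHom ↔
      ∃ h₁' h₂' : Fin 3 → ZMod 2,
        ({h₁', h₂'} : Multiset (Fin 3 → ZMod 2)) = {h₁, h₂} ∧
        (∑ i, g₁ i) = (∑ i, h₁' i) ∧ (∑ i, g₂ i) = (∑ i, h₂' i) ∧
        ∀ i : Fin 3, g₁ i + g₂ i = 1 ∧ h₁' i + h₂' i = 1 :=
  stmt_10_general g₁ g₂ h₁ h₂ hne
end

section
/- The kernel of φ_2 : C[q_{00},q_{01},q_{10},q_{11}] → C[a_0^{(1)},a_0^{(2)},a_0^{(3)},a_1^{(1)},a_1^{(2)},a_1^{(3)}] defined by q_{g1 g2} ↦ a_{g1}^{(1)} a_{g2}^{(2)} a_{g1+g2}^{(3)} is the zero ideal. -/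
/-!
A monomial map `X i ↦ X ^ w i` is the map of monoid algebras induced by the additive map
`s ↦ ∑ i, s i • w i` on exponent vectors, so it is injective as soon as the exponent vectors
`w i` are linearly independent over `ℕ`. For `φ₂` the exponent vector of `q_{g₁g₂}` is the
sum of the indicators of the slots `(g₁, 1)`, `(g₂, 2)` and `(g₁ + g₂, 3)`, and two distinct
`q`'s share exactly one slot. Hence, for the image `E` of `s`, the sum of `E` over the three slots
of `σ` is `2 s σ + ∑ τ, s τ`, while `∑ τ, s τ` is the sum of `E` over the first factor; so `s`
is recovered from `E`.
-/

open MvPolynomial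

theorem Finsupp.linearCombination_apply_apply_of_fintype {α β R : Type*} [Fintype α]
    [Semiring R] (w : α → β →₀ R) (s : α →₀ R) (p : β) :
    linearCombination R w s p = ∑ i, s i * w i p := by
  simp [linearCombination_apply, sum_fintype, finsetSum_apply]

namespace MvPolynomial

variable {R σ τ : Type*} [CommSemiring R]

theorem aeval_monomial_eq_mapDomainAlgHom (w : σ → τ →₀ ℕ) :
    aeval (fun i => monomial (w i) (1 : R)) =
      AddMonoidAlgebra.mapDomainAlgHom R R (Finsupp.linearCombination ℕ w).toAddMonoidHom := by
  refine algHom_ext fun i => ?_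
  rw [aeval_X]
  show _ = AddMonoidAlgebra.mapDomain _ (AddMonoidAlgebra.single _ _)
  rw [AddMonoidAlgebra.mapDomain_single]
  simp only [LinearMap.toAddMonoidHom_coe, Finsupp.linearCombination_single, one_smul]
  rfl

theorem aeval_monomial_injective {w : σ → τ →₀ ℕ} (hw : LinearIndependent ℕ w) :
    Function.Injective (aeval (R := R) fun i => monomial (w i) (1 : R)) := by
  rw [aeval_monomial_eq_mapDomainAlgHom]
  exact AddMonoidAlgebra.mapDomain_injective hw

end MvPolynomial

noncomputable def phiExponent (n : ℕ) (σ : Fin n → ZMod 2) : ZMod 2 × Fin (n + 1) →₀ ℕ :=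
  ∑ i, Finsupp.single (σ i, Fin.castSucc i) 1 + Finsupp.single (∑ i, σ i, Fin.last n) 1

theorem phi_eq_aeval_monomial (n : ℕ) :
    phi n = aeval fun σ => monomial (phiExponent n σ) 1 := by
  simp only [phi, phiExponent, monomial_add_single, monomial_sum_one, X, pow_one]

theorem phiExponent_two_count (σ τ : Fin 2 → ZMod 2) :
    phiExponent 2 τ (σ 0, 0) + phiExponent 2 τ (σ 1, 1) + phiExponent 2 τ (σ 0 + σ 1, 2) =
      1 + if τ = σ then 2 else 0 := by
  simp only [phiExponent, Fin.sum_univ_two, Finsupp.add_apply, Finsupp.single_apply]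
  revert σ τ
  decide

theorem phiExponent_two_degree (τ : Fin 2 → ZMod 2) :
    phiExponent 2 τ (0, 0) + phiExponent 2 τ (1, 0) = 1 := by
  simp only [phiExponent, Fin.sum_univ_two, Finsupp.add_apply, Finsupp.single_apply]
  revert τ
  decide

theorem linearCombination_phiExponent_two_recover (s : (Fin 2 → ZMod 2) →₀ ℕ)
    (σ : Fin 2 → ZMod 2) (E : ZMod 2 × Fin 3 →₀ ℕ)
    (hE : E = Finsupp.linearCombination ℕ (phiExponent 2) s) :
    2 * s σ + (E (0, 0) + E (1, 0)) = E (σ 0, 0) + E (σ 1, 1) + E (σ 0 + σ 1, 2) := by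
  simp only [hE, Finsupp.linearCombination_apply_apply_of_fintype, ← Finset.sum_add_distrib,
    ← mul_add, phiExponent_two_count, phiExponent_two_degree]
  simp only [mul_add, mul_one, mul_ite, mul_zero, Finset.sum_add_distrib, Finset.sum_ite_eq',
    Finset.mem_univ, if_true]
  ring

theorem linearIndependent_phiExponent_two : LinearIndependent ℕ (phiExponent 2) := by
  intro s t hst
  ext σ
  have hs := linearCombination_phiExponent_two_recover s σ _ rfl
  have ht := linearCombination_phiExponent_two_recover t σ _ rfl
  rw [hst] at hs
  omega

/-- The kernel of `φ₂`, sending `q_{g₁g₂} ↦ a_{g₁}^{(1)} a_{g₂}^{(2)} a_{g₁+g₂}^{(3)}`,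
is the zero ideal. -/
theorem stmt_11 : RingHom.ker (phi 2).toRingHom = ⊥ := by
  refine (RingHom.injective_iff_ker_eq_bot _).mp ?_
  rw [phi_eq_aeval_monomial]
  exact aeval_monomial_injective linearIndependent_phiExponent_two
end

section
/- For n ≥ 4 and any index 1 ≤ i ≤ n, if a quadratic binomial q = q_{g_1} q_{g_2} − q_{h_1} q_{h_2} (with g_1,g_2,h_1,h_2 ∈ Z2^n) satisfies g_1^{(i)} = g_2^{(i)} = h_1^{(i)} = h_2^{(i)} = j for some fixed j ∈ Z2, then q ∈ ker φ_n if and only if π_i(q) ∈ ker φ_{n-1}, where π_i deletes the i-th index from every variable. -/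
/-!
If the `i`-th index of `σ` is `j`, then `φ_{m+1}(q_σ)` is `φ_m(π_i q_σ)` with every leaf index
`k` moved to `i.succAbove k`, the last-index variable `a_g` replaced by `a_{g+j}`, and an extra factor
`a_j^{(i)}`. This substitution is an injective algebra map (it has a left inverse that sets
`a_j^{(i)}` to `1`), so `φ_{m+1}(q) = 0 ↔ φ_m(π_i q) = 0` for every binomial `q` whose four
variables all have `i`-th index `j`.
-/

open MvPolynomial

/-- The projection `π_i` deleting the `i`-th index of every variable: it sends the variable
`q_σ` (with `σ ∈ (ℤ/2)^(m+1)`) to `q_{σ ∘ i.succAbove}` (with index tuple in `(ℤ/2)^m`). -/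
noncomputable def proj (m : ℕ) (i : Fin (m + 1)) :
    MvPolynomial (Fin (m + 1) → ZMod 2) ℂ →ₐ[ℂ] MvPolynomial (Fin m → ZMod 2) ℂ :=
  aeval fun σ => X (σ ∘ i.succAbove)

noncomputable def insertLeaf (m : ℕ) (i : Fin (m + 1)) (j : ZMod 2) :
    MvPolynomial (ZMod 2 × Fin (m + 1)) ℂ →ₐ[ℂ] MvPolynomial (ZMod 2 × Fin (m + 2)) ℂ :=
  aeval fun p => Fin.lastCases
    (X (p.1 + j, Fin.last (m + 1)) * X (j, Fin.castSucc i))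
    (fun k => X (p.1, Fin.castSucc (i.succAbove k))) p.2

noncomputable def eraseLeaf (m : ℕ) (i : Fin (m + 1)) (j : ZMod 2) :
    MvPolynomial (ZMod 2 × Fin (m + 2)) ℂ →ₐ[ℂ] MvPolynomial (ZMod 2 × Fin (m + 1)) ℂ :=
  aeval fun p =>
    if p.2 = Fin.last (m + 1) then X (p.1 + j, Fin.last m)
    else if p.2 = Fin.castSucc i then 1
    else X (p.1, i.predAbove p.2)

lemma eraseLeaf_comp_insertLeaf (m : ℕ) (i : Fin (m + 1)) (j : ZMod 2) :
    (eraseLeaf m i j).comp (insertLeaf m i j) = AlgHom.id ℂ _ := by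
  have hjj : j + j = 0 := by revert j; decide
  apply MvPolynomial.algHom_ext
  rintro ⟨g, c⟩
  induction c using Fin.lastCases with
  | last => simp [insertLeaf, eraseLeaf, (Fin.castSucc_lt_last i).ne, add_assoc, hjj]
  | cast k =>
    have h_ne_last : Fin.castSucc (i.succAbove k) ≠ Fin.last (m + 1) :=
      (Fin.castSucc_lt_last _).ne
    have h_ne_i : Fin.castSucc (i.succAbove k) ≠ Fin.castSucc i := by
      simp [Fin.castSucc_inj, Fin.succAbove_ne i k]
    have h_pred : i.predAbove (Fin.castSucc (i.succAbove k)) = Fin.castSucc k := by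
      rw [← Fin.castSucc_succAbove_castSucc, Fin.predAbove_succAbove]
    simp [insertLeaf, eraseLeaf, h_ne_last, h_ne_i, h_pred]

lemma insertLeaf_injective (m : ℕ) (i : Fin (m + 1)) (j : ZMod 2) :
    Function.Injective (insertLeaf m i j) := by
  refine Function.LeftInverse.injective (g := eraseLeaf m i j) fun x => ?_
  rw [← AlgHom.comp_apply, eraseLeaf_comp_insertLeaf, AlgHom.id_apply]

lemma insertLeaf_phi_proj_X (m : ℕ) (i : Fin (m + 1)) (j : ZMod 2)
    (σ : Fin (m + 1) → ZMod 2) (hσ : σ i = j) :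
    insertLeaf m i j (phi m (proj m i (X σ))) = phi (m + 1) (X σ) := by
  simp only [phi, proj, insertLeaf, aeval_X, map_mul, map_prod, Function.comp]
  rw [Fin.prod_univ_succAbove (fun k => X ((σ k, Fin.castSucc k) : ZMod 2 × Fin (m + 2))) i,
    Fin.sum_univ_succAbove σ i, hσ]
  simp only [Fin.lastCases_last, Fin.lastCases_castSucc]
  rw [add_comm j]
  ring

theorem stmt_12_general (m : ℕ) (i : Fin (m + 1)) (j : ZMod 2)
    (g₁ g₂ h₁ h₂ : Fin (m + 1) → ZMod 2)
    (hfix : g₁ i = j ∧ g₂ i = j ∧ h₁ i = j ∧ h₂ i = j) :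
    X g₁ * X g₂ - X h₁ * X h₂ ∈ RingHom.ker (phi (m + 1)).toRingHom ↔
      proj m i (X g₁ * X g₂ - X h₁ * X h₂) ∈ RingHom.ker (phi m).toRingHom := by
  obtain ⟨hg₁, hg₂, hh₁, hh₂⟩ := hfix
  have factor : insertLeaf m i j (phi m (proj m i (X g₁ * X g₂ - X h₁ * X h₂))) =
      phi (m + 1) (X g₁ * X g₂ - X h₁ * X h₂) := by
    simp only [map_sub, map_mul, insertLeaf_phi_proj_X m i j _ hg₁,
      insertLeaf_phi_proj_X m i j _ hg₂, insertLeaf_phi_proj_X m i j _ hh₁,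
      insertLeaf_phi_proj_X m i j _ hh₂]
  simp only [RingHom.mem_ker, AlgHom.toRingHom_eq_coe, RingHom.coe_coe, ← factor]
  exact map_eq_zero_iff _ (insertLeaf_injective m i j)

/-- For `n = m + 1 ≥ 4` and any leaf `i`, if the quadratic binomial
`q_{g₁}q_{g₂} − q_{h₁}q_{h₂}` has its `i`-th index fixed to `j` in all four variables, then
it lies in `ker φ_n` iff its projection `π_i(q)` lies in `ker φ_{n-1}`. -/
theorem stmt_12 (m : ℕ) (hm : 4 ≤ m + 1) (i : Fin (m + 1)) (j : ZMod 2)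
    (g₁ g₂ h₁ h₂ : Fin (m + 1) → ZMod 2)
    (hfix : g₁ i = j ∧ g₂ i = j ∧ h₁ i = j ∧ h₂ i = j) :
    X g₁ * X g₂ - X h₁ * X h₂ ∈ RingHom.ker (phi (m + 1)).toRingHom ↔
      proj m i (X g₁ * X g₂ - X h₁ * X h₂) ∈ RingHom.ker (phi m).toRingHom :=
  stmt_12_general m i j g₁ g₂ h₁ h₂ hfix
end

section
/- For n = 4, the ten binomials q_{0010}q_{0101}−q_{0011}q_{0100}, q_{0001}q_{0110}−q_{0011}q_{0100}, q_{0000}q_{0111}−q_{0011}q_{0100}, q_{0010}q_{1001}−q_{0011}q_{1000}, q_{0001}q_{1010}−q_{0011}q_{1000}, q_{0000}q_{1011}−q_{0011}q_{1000}, q_{0001}q_{1100}−q_{0101}q_{1000}, q_{0000}q_{1101}−q_{0101}q_{1000}, q_{0000}q_{1110}−q_{0110}q_{1000}, q_{1000}q_{1111}−q_{1011}q_{1100} all lie in ker φ_4, and their exponent vectors (viewed in Z^{16}) are linearly independent, spanning a sublattice of rank 10 = 2^4 − 4 − 2 equal to the rank of ker B_4. -/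
/-!
`φ₄` sends `q_σ` to the product of the variables in the multiset `clawVars 4 σ`, and the
`σ`-column of `B₄` counts the same variables. Hence a binomial `q^P - q^N` is killed by `φ₄`
as soon as `P` and `N` have the same multiset of variables, and then its exponent vector lies
in `ker B₄`; for the ten binomials this is a finite check. Their exponent vectors are
independent because they are triangular with respect to the second monomials `q_{g₂}`, and
`dim ker B₄ ≤ 10` because the image of `B₄` contains six triangular vectors.
-/

open MvPolynomial

/-- The ten quadruples `(g₁, g₂, h₁, h₂)` defining the binomials
`q_{g₁} q_{g₂} − q_{h₁} q_{h₂}` generating the lattice basis ideal `I_{L₄}`. -/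
def quads : Fin 10 →
    (Fin 4 → ZMod 2) × (Fin 4 → ZMod 2) × (Fin 4 → ZMod 2) × (Fin 4 → ZMod 2) :=
  ![(![0,0,1,0], ![0,1,0,1], ![0,0,1,1], ![0,1,0,0]),
    (![0,0,0,1], ![0,1,1,0], ![0,0,1,1], ![0,1,0,0]),
    (![0,0,0,0], ![0,1,1,1], ![0,0,1,1], ![0,1,0,0]),
    (![0,0,1,0], ![1,0,0,1], ![0,0,1,1], ![1,0,0,0]),
    (![0,0,0,1], ![1,0,1,0], ![0,0,1,1], ![1,0,0,0]),
    (![0,0,0,0], ![1,0,1,1], ![0,0,1,1], ![1,0,0,0]),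
    (![0,0,0,1], ![1,1,0,0], ![0,1,0,1], ![1,0,0,0]),
    (![0,0,0,0], ![1,1,0,1], ![0,1,0,1], ![1,0,0,0]),
    (![0,0,0,0], ![1,1,1,0], ![0,1,1,0], ![1,0,0,0]),
    (![1,0,0,0], ![1,1,1,1], ![1,0,1,1], ![1,1,0,0])]

/-- The exponent vector in `ℤ^16 ⊆ ℚ^16` of the binomial `q_{g₁} q_{g₂} − q_{h₁} q_{h₂}`. -/
def expVec (t : (Fin 4 → ZMod 2) × (Fin 4 → ZMod 2) × (Fin 4 → ZMod 2) × (Fin 4 → ZMod 2)) :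
    (Fin 4 → ZMod 2) → ℚ := fun σ =>
  (if σ = t.1 then 1 else 0) + (if σ = t.2.1 then 1 else 0)
    - (if σ = t.2.2.1 then 1 else 0) - (if σ = t.2.2.2 then 1 else 0)

def binomialExponent {α : Type*} [DecidableEq α] (P N : Multiset α) (a : α) : ℤ :=
  P.count a - N.count a

theorem Multiset.count_bind_eq_sum {α β : Type*} [DecidableEq α] [DecidableEq β] [Fintype β]
    (P : Multiset β) (f : β → Multiset α) (a : α) :
    (P.bind f).count a = ∑ b, P.count b * (f b).count a := by
  rw [Multiset.count_bind, Finset.sum_multiset_map_count]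
  simp only [smul_eq_mul]
  refine Finset.sum_subset (Finset.subset_univ _) fun b _ hb => ?_
  rw [Multiset.count_eq_zero.2 (by simpa using hb), zero_mul]

theorem linearIndependent_of_triangular {K ι : Type*} [Field K] {k : ℕ} (v : Fin k → ι → K)
    (p : Fin k → ι) (hdiag : ∀ i, v i (p i) ≠ 0) (htri : ∀ i j, i < j → v i (p j) = 0) :
    LinearIndependent K v := by
  have hdet : (Matrix.of fun i j => v i (p j)).det ≠ 0 := by
    rw [Matrix.det_of_isLowerTriangular (Matrix.of fun i j => v i (p j))
      fun i j hij => htri i j hij]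
    exact Finset.prod_ne_zero_iff.2 fun i _ => hdiag i
  exact .of_comp (LinearMap.funLeft K K p) (Matrix.linearIndependent_rows_of_det_ne_zero hdet)

theorem linearIndependent_intCast_of_triangular {K ι : Type*} [Field K] [CharZero K] {k : ℕ}
    (w : Fin k → ι → ℤ) (p : Fin k → ι) (hdiag : ∀ i, w i (p i) ≠ 0)
    (htri : ∀ i j, i < j → w i (p j) = 0) : LinearIndependent K fun i x => (w i x : K) :=
  linearIndependent_of_triangular _ p (fun i => Int.cast_ne_zero.2 (hdiag i))
    fun i j hij => by simp [htri i j hij]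

def clawVars (n : ℕ) (σ : Fin n → ZMod 2) : Multiset (ZMod 2 × Fin (n + 1)) :=
  (Finset.univ.val.map fun i => (σ i, Fin.castSucc i)) + {(∑ i, σ i, Fin.last n)}

section

variable {n : ℕ}

theorem phi_X_s18 (σ : Fin n → ZMod 2) : phi n (X σ) = ((clawVars n σ).map X).prod := by
  simp only [phi, aeval_X, clawVars, Multiset.map_add, Multiset.prod_add, Multiset.map_map,
    Multiset.map_singleton, Multiset.prod_singleton, Finset.prod_eq_multiset_prod]
  rfl

theorem phi_multiset_prod_X (P : Multiset (Fin n → ZMod 2)) :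
    phi n (P.map X).prod = ((P.bind (clawVars n)).map X).prod := by
  induction P using Multiset.induction_on with
  | empty => simp
  | cons σ P ih => simp [phi_X_s18, ih]

theorem sub_mem_ker_phi {P N : Multiset (Fin n → ZMod 2)}
    (h : P.bind (clawVars n) = N.bind (clawVars n)) :
    (P.map X).prod - (N.map X).prod ∈ RingHom.ker (phi n).toRingHom := by
  simp [RingHom.mem_ker, phi_multiset_prod_X, h]

theorem clawMatrix_apply (p : ZMod 2 × Fin (n + 1)) (σ : Fin n → ZMod 2) :
    clawMatrix n p σ = (clawVars n σ).count p := by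
  obtain ⟨g, j⟩ := p
  induction j using Fin.lastCases with
  | last => simp [clawMatrix, clawVars, Multiset.count_singleton]
  | cast k =>
    have hlast : (g, k.castSucc) ∉ ({(∑ i, σ i, Fin.last n)} : Multiset _) := by simp
    rw [clawVars, Multiset.count_add, Multiset.count_eq_zero.2 hlast, add_zero,
      Multiset.count_map, ← Finset.filter_val, Finset.card_val, Finset.card_filter]
    simp [clawMatrix, and_comm (a := _ = σ _), ite_and]

open Matrix in
theorem clawMatrix_mulVec_binomialExponent (P N : Multiset (Fin n → ZMod 2)) :
    clawMatrix n *ᵥ (fun σ => (binomialExponent P N σ : ℚ)) =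
      fun p => (binomialExponent (P.bind (clawVars n)) (N.bind (clawVars n)) p : ℚ) := by
  funext p
  simp only [mulVec, dotProduct, clawMatrix_apply, binomialExponent, Multiset.count_bind_eq_sum]
  push_cast
  simp only [mul_sub, Finset.sum_sub_distrib, mul_comm]

end

theorem expVec_eq_binomialExponent
    (t : (Fin 4 → ZMod 2) × (Fin 4 → ZMod 2) × (Fin 4 → ZMod 2) × (Fin 4 → ZMod 2)) :
    expVec t = fun σ => (binomialExponent {t.1, t.2.1} {t.2.2.1, t.2.2.2} σ : ℚ) := by
  funext σ
  simp only [expVec, binomialExponent, Multiset.insert_eq_cons, Multiset.count_cons,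
    Multiset.count_singleton]
  push_cast
  ring

theorem quads_bind_clawVars (t : Fin 10) :
    ({(quads t).1, (quads t).2.1} : Multiset _).bind (clawVars 4) =
      ({(quads t).2.2.1, (quads t).2.2.2} : Multiset _).bind (clawVars 4) := by
  revert t
  decide

theorem binomial_quads_mem_ker_phi (t : Fin 10) :
    X (quads t).1 * X (quads t).2.1 - X (quads t).2.2.1 * X (quads t).2.2.2
      ∈ RingHom.ker (phi 4).toRingHom := by
  simpa using sub_mem_ker_phi (quads_bind_clawVars t)

theorem expVec_quads_mem_ker_clawMatrix (t : Fin 10) :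
    expVec (quads t) ∈ LinearMap.ker (clawMatrix 4).mulVecLin := by
  rw [LinearMap.mem_ker, Matrix.mulVecLin_apply, expVec_eq_binomialExponent,
    clawMatrix_mulVec_binomialExponent, quads_bind_clawVars]
  funext p
  simp [binomialExponent]

theorem linearIndependent_expVec_quads :
    LinearIndependent ℚ fun t : Fin 10 => expVec (quads t) := by
  simp only [expVec_eq_binomialExponent]
  exact linearIndependent_intCast_of_triangular _ (fun t => (quads t).2.1)
    (by decide) (by decide)

/-- `B₄` has rank 5 over `𝔽₂`, so none of its `6 × 6` minors is unitriangular; these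
combinations of columns give a triangular family in its image with diagonal `1, -2, 1, 1, 1, 1`. -/
def rankWitness : Fin 6 → Multiset (Fin 4 → ZMod 2) × Multiset (Fin 4 → ZMod 2) :=
  ![({0}, 0), ({![1,1,0,0], 0}, {![1,0,0,0], ![0,1,0,0]}),
    ({![0,0,0,1]}, {0}), ({![0,0,1,0]}, {0}), ({![0,1,0,0]}, {0}), ({![1,0,0,0]}, {0})]

def rankPivot : Fin 6 → ZMod 2 × Fin 5 := ![(0, 0), (1, 4), (1, 3), (1, 2), (1, 1), (1, 0)]

theorem six_le_finrank_range_clawMatrix :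
    6 ≤ Module.finrank ℚ (LinearMap.range (clawMatrix 4).mulVecLin) := by
  let v : Fin 6 → ZMod 2 × Fin 5 → ℚ := fun i =>
    (clawMatrix 4).mulVecLin fun σ => (binomialExponent (rankWitness i).1 (rankWitness i).2 σ : ℚ)
  have hv : LinearIndependent ℚ v := by
    simp only [v, Matrix.mulVecLin_apply, clawMatrix_mulVec_binomialExponent]
    exact linearIndependent_intCast_of_triangular _ rankPivot (by decide) (by decide)
  have hle : Submodule.span ℚ (Set.range v) ≤ LinearMap.range (clawMatrix 4).mulVecLin :=
    Submodule.span_le.2 <| Set.range_subset_iff.2 fun i => LinearMap.mem_range_self _ _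
  simpa [finrank_span_eq_card hv] using Submodule.finrank_mono hle

theorem finrank_ker_clawMatrix_four :
    Module.finrank ℚ (LinearMap.ker (clawMatrix 4).mulVecLin) = 10 := by
  have hspan : Submodule.span ℚ (Set.range fun t : Fin 10 => expVec (quads t))
      ≤ LinearMap.ker (clawMatrix 4).mulVecLin :=
    Submodule.span_le.2 <| Set.range_subset_iff.2 expVec_quads_mem_ker_clawMatrix
  have h10 := Submodule.finrank_mono hspan
  rw [finrank_span_eq_card linearIndependent_expVec_quads, Fintype.card_fin] at h10
  have hrank := LinearMap.finrank_range_add_finrank_ker (clawMatrix 4).mulVecLin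
  rw [Module.finrank_fintype_fun_eq_card] at hrank
  have hcard : Fintype.card (Fin 4 → ZMod 2) = 16 := by decide
  have hrange := six_le_finrank_range_clawMatrix
  omega

/-- The ten listed binomials all lie in `ker φ₄`, their exponent vectors are linearly
independent in `ℚ^16`, and they span a sublattice of rank `10 = 2⁴ − 4 − 2`, which equals
the rank of `ker B₄`. -/
theorem stmt_18 :
    (∀ t : Fin 10,
      X (quads t).1 * X (quads t).2.1 - X (quads t).2.2.1 * X (quads t).2.2.2
        ∈ RingHom.ker (phi 4).toRingHom) ∧
    LinearIndependent ℚ (fun t : Fin 10 => expVec (quads t)) ∧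
    Module.finrank ℚ (Submodule.span ℚ (Set.range fun t : Fin 10 => expVec (quads t))) = 10 ∧
    Module.finrank ℚ (LinearMap.ker (clawMatrix 4).mulVecLin) = 10 :=
  ⟨binomial_quads_mem_ker_phi, linearIndependent_expVec_quads,
    by rw [finrank_span_eq_card linearIndependent_expVec_quads, Fintype.card_fin],
    finrank_ker_clawMatrix_four⟩
end
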